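/- arXiv:math/0702128 — 2 statements merged into one kernel-verified Lean document; each statement's English description precedes it below -/
import Mathlib

section
/- Let 𝔉₂ be the completed free Lie algebra over a field k of characteristic 0 on generators X, Y. Suppose R ∈ 𝔉₂ is of the form R = Σ_{m≥1} a_m (ad Y)^{m-1}(X) with a_m ∈ k, and suppose R(X,Y) = −R(Y,X) (antisymmetry under swapping the two generators). Then a_m = 0 for all m ≠ 2, i.e. R = a_2 [Y,X]. -/
open scoped BigOperators

/-- Words in the letters `X = 0`, `Y = 1`, ... -/
abbrev Word (n : ℕ) := List (Fin n)

/-- Coefficient families of non-commutative formal power series `k⟨⟨X₁,…,Xₙ⟩⟩`: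
a series is recorded by its coefficient at each word. -/
abbrev NC (k : Type*) (n : ℕ) := Word n → k

/-- The list of shuffles (with multiplicity) of two words. -/
def shuffle {α : Type*} : List α → List α → List (List α)
  | [], v => [v]
  | u, [] => [u]
  | a :: u, b :: v =>
      ((shuffle u (b :: v)).map (a :: ·)) ++ ((shuffle (a :: u) v).map (b :: ·))
  termination_by u v => u.length + v.length
  decreasing_by all_goals simp +arith +decide

variable {k : Type*}

/-- `φ` is group-like for the coproduct with `X`, `Y` primitive:
`Δφ = φ ⊗ φ` and constant term 1, expressed coefficientwise via shuffles. -/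
def IsGroupLike [CommRing k] (φ : NC k 2) : Prop :=
  φ [] = 1 ∧ ∀ u v : Word 2, φ u * φ v = ((shuffle u v).map φ).sum

/-- `φ` is Lie-like (primitive): `Δφ = φ⊗1 + 1⊗φ`, coefficientwise. -/
def IsLieLike [CommRing k] (φ : NC k 2) : Prop :=
  φ [] = 0 ∧ ∀ u v : Word 2, u ≠ [] → v ≠ [] → ((shuffle u v).map φ).sum = 0

/-- commutator group-like: group-like with vanishing coefficients of `X` and `Y`. -/
def IsCommGroupLike [CommRing k] (φ : NC k 2) : Prop :=
  IsGroupLike φ ∧ φ [0] = 0 ∧ φ [1] = 0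

/-- A degree-one element `a·T` of `A[[T]]`, modelling a degree-1 element of a
completed graded algebra. -/
noncomputable def lin {A : Type*} [Ring A] (a : A) : PowerSeries A :=
  PowerSeries.mk fun n => if n = 1 then a else 0

/-- Substitution `φ(X₁, X₂)` of a non-commutative power series `φ` at two
elements (of positive valuation) of a completed graded algebra, where the
completion is modelled by `A[[T]]` (degree `n` part = coefficient of `Tⁿ`). -/
noncomputable def substPS [CommRing k] {A : Type*} [Ring A] [Algebra k A]
    (φ : NC k 2) (P Q : PowerSeries A) : PowerSeries A :=
  PowerSeries.mk fun n =>
    ∑ m ∈ Finset.range (n + 1), ∑ u : Fin m → Fin 2,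
      φ (List.ofFn u) • PowerSeries.coeff n (((List.ofFn u).map ![P, Q]).prod)

/-- Exponential of a power series (meaningful when the constant term vanishes). -/
noncomputable def expPS (k : Type*) [Field k] {A : Type*} [Ring A] [Algebra k A]
    (s : PowerSeries A) : PowerSeries A :=
  PowerSeries.mk fun n =>
    ∑ m ∈ Finset.range (n + 1), (Nat.factorial m : k)⁻¹ • PowerSeries.coeff n (s ^ m)

/-- Coefficients of the multiplicative inverse of a power series with
constant term `1`. -/
noncomputable def invCoeff {A : Type*} [Ring A] (s : PowerSeries A) : ℕ → A
  | 0 => 1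
  | n + 1 => -∑ j : Fin (n + 1), invCoeff s j.1 * PowerSeries.coeff (n + 1 - j.1) s
  termination_by n => n
  decreasing_by exact j.2

/-- Inverse of a power series with constant term `1`. -/
noncomputable def PSInv {A : Type*} [Ring A] (s : PowerSeries A) : PowerSeries A :=
  PowerSeries.mk (invCoeff s)

/-- Relations presenting (the enveloping algebra of) the pure sphere braid Lie
algebra `𝔓₅` on 5 strings. -/
inductive P5Rel (k : Type*) [CommRing k] :
    FreeAlgebra k (Fin 5 × Fin 5) → FreeAlgebra k (Fin 5 × Fin 5) → Prop
  | diag (i : Fin 5) : P5Rel k (FreeAlgebra.ι k (i, i)) 0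
  | symm (i j : Fin 5) : P5Rel k (FreeAlgebra.ι k (i, j)) (FreeAlgebra.ι k (j, i))
  | rowsum (i : Fin 5) : P5Rel k (∑ j : Fin 5, FreeAlgebra.ι k (i, j)) 0
  | disj (i j l m : Fin 5) (h : i ≠ l ∧ i ≠ m ∧ j ≠ l ∧ j ≠ m) :
      P5Rel k (FreeAlgebra.ι k (i, j) * FreeAlgebra.ι k (l, m))
              (FreeAlgebra.ι k (l, m) * FreeAlgebra.ι k (i, j))

/-- The (graded) enveloping algebra `U𝔓₅` of the pure sphere braid Lie algebra. -/
abbrev P5A (k : Type*) [CommRing k] := RingQuot (P5Rel k)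

/-- The generator `X_{ij}` of `U𝔓₅`. -/
noncomputable def Xg (k : Type*) [CommRing k] (i j : Fin 5) : P5A k :=
  RingQuot.mkAlgHom k (P5Rel k) (FreeAlgebra.ι k (i, j))

/-- Relations presenting (the enveloping algebra of) the infinitesimal braid
("chord diagram") Lie algebra `𝔞ₙ`. -/
inductive ARel (k : Type*) [CommRing k] (n : ℕ) :
    FreeAlgebra k (Fin n × Fin n) → FreeAlgebra k (Fin n × Fin n) → Prop
  | diag (i : Fin n) : ARel k n (FreeAlgebra.ι k (i, i)) 0
  | symm (i j : Fin n) : ARel k n (FreeAlgebra.ι k (i, j)) (FreeAlgebra.ι k (j, i))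
  | comm3 (i j l : Fin n) (h : i ≠ j ∧ i ≠ l ∧ j ≠ l) :
      ARel k n (FreeAlgebra.ι k (i, j) * (FreeAlgebra.ι k (i, l) + FreeAlgebra.ι k (j, l)))
               ((FreeAlgebra.ι k (i, l) + FreeAlgebra.ι k (j, l)) * FreeAlgebra.ι k (i, j))
  | comm4 (i j l m : Fin n)
      (h : i ≠ j ∧ i ≠ l ∧ i ≠ m ∧ j ≠ l ∧ j ≠ m ∧ l ≠ m) :
      ARel k n (FreeAlgebra.ι k (i, j) * FreeAlgebra.ι k (l, m))
               (FreeAlgebra.ι k (l, m) * FreeAlgebra.ι k (i, j))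

/-- The (graded) enveloping algebra `U𝔞ₙ`. -/
abbrev AA (k : Type*) [CommRing k] (n : ℕ) := RingQuot (ARel k n)

/-- The generator `t_{ij}` of `U𝔞ₙ`. -/
noncomputable def tg (k : Type*) [CommRing k] (n : ℕ) (i j : Fin n) : AA k n :=
  RingQuot.mkAlgHom k (ARel k n) (FreeAlgebra.ι k (i, j))

/-- The series `X` (i.e. the image of the first generator) in the model
`(FreeAlgebra k (Fin 2))[[T]]` of `k⟨⟨X,Y⟩⟩`. -/
noncomputable def XF (k : Type*) [CommRing k] : PowerSeries (FreeAlgebra k (Fin 2)) :=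
  lin (FreeAlgebra.ι k (0 : Fin 2))

/-- The series `Y`. -/
noncomputable def YF (k : Type*) [CommRing k] : PowerSeries (FreeAlgebra k (Fin 2)) :=
  lin (FreeAlgebra.ι k (1 : Fin 2))

/-- The series `Z = -X-Y`. -/
noncomputable def ZF (k : Type*) [CommRing k] : PowerSeries (FreeAlgebra k (Fin 2)) :=
  -XF k - YF k

/-- `φ(X_{ab}, X_{bc})` in the completed `U𝔓₅`. -/
noncomputable def S5 (k : Type*) [Field k] (φ : NC k 2) (a b c : Fin 5) :
    PowerSeries (P5A k) :=
  substPS φ (lin (Xg k a b)) (lin (Xg k b c))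

/-- The multiplicative 5-cycle relation
`φ(X₁₂,X₂₃)φ(X₃₄,X₄₅)φ(X₅₁,X₁₂)φ(X₂₃,X₃₄)φ(X₄₅,X₅₁) = 1` in the completed `U𝔓₅`. -/
def FiveCycleMul (k : Type*) [Field k] (φ : NC k 2) : Prop :=
  S5 k φ 0 1 2 * S5 k φ 2 3 4 * S5 k φ 4 0 1 * S5 k φ 1 2 3 * S5 k φ 3 4 0 = 1

/-- `t_{ij}` as a degree-one element of the completed `U𝔞₄`. -/
noncomputable def lt (k : Type*) [Field k] (i j : Fin 4) : PowerSeries (AA k 4) :=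
  lin (tg k 4 i j)

/-- Drinfel'd's pentagon equation
`φ(t₁₂,t₂₃+t₂₄)φ(t₁₃+t₂₃,t₃₄) = φ(t₂₃,t₃₄)φ(t₁₂+t₁₃,t₂₄+t₃₄)φ(t₁₂,t₂₃)`
in the completed `U𝔞₄` (strings are `0,1,2,3`). -/
def Pentagon (k : Type*) [Field k] (φ : NC k 2) : Prop :=
  substPS φ (lt k 0 1) (lt k 1 2 + lt k 1 3) * substPS φ (lt k 0 2 + lt k 1 2) (lt k 2 3) =
    substPS φ (lt k 1 2) (lt k 2 3) *
      substPS φ (lt k 0 1 + lt k 0 2) (lt k 1 3 + lt k 2 3) * substPS φ (lt k 0 1) (lt k 1 2)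

/-- The 2-cycle relation `φ(X,Y)φ(Y,X) = 1` in `k⟨⟨X,Y⟩⟩`. -/
def TwoCycleMul (k : Type*) [Field k] (φ : NC k 2) : Prop :=
  substPS φ (XF k) (YF k) * substPS φ (YF k) (XF k) = 1

/-- The 3-cycle relation
`e^{μX/2}φ(Z,X)e^{μZ/2}φ(Y,Z)e^{μY/2}φ(X,Y) = 1`, `Z = -X-Y`, in `k⟨⟨X,Y⟩⟩`. -/
def ThreeCycleMul (k : Type*) [Field k] (μ : k) (φ : NC k 2) : Prop :=
  expPS k ((μ / 2) • XF k) * substPS φ (ZF k) (XF k) * expPS k ((μ / 2) • ZF k) *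
      substPS φ (YF k) (ZF k) * expPS k ((μ / 2) • YF k) * substPS φ (XF k) (YF k) = 1

/-- The special 3-cycle relation `φ(Z,X)φ(Y,Z)φ(X,Y) = 1`, `Z = -X-Y`. -/
def Special3 (k : Type*) [Field k] (φ : NC k 2) : Prop :=
  substPS φ (ZF k) (XF k) * substPS φ (YF k) (ZF k) * substPS φ (XF k) (YF k) = 1

/-- Drinfel'd's first hexagon equation, for elements `a = t₁₂`, `b = t₁₃`, `c = t₂₃`:
`exp(μ(t₁₃+t₂₃)/2) = φ(t₁₃,t₁₂)exp(μt₁₃/2)φ(t₁₃,t₂₃)⁻¹exp(μt₂₃/2)φ(t₁₂,t₂₃)`. -/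
def Hex1 (k : Type*) [Field k] {A : Type*} [Ring A] [Algebra k A]
    (μ : k) (φ : NC k 2) (a b c : A) : Prop :=
  expPS k ((μ / 2) • (lin b + lin c)) =
    substPS φ (lin b) (lin a) * expPS k ((μ / 2) • lin b) * PSInv (substPS φ (lin b) (lin c)) *
      expPS k ((μ / 2) • lin c) * substPS φ (lin a) (lin c)

/-- Drinfel'd's second hexagon equation, for elements `a = t₁₂`, `b = t₁₃`, `c = t₂₃`:
`exp(μ(t₁₂+t₁₃)/2) = φ(t₂₃,t₁₃)⁻¹exp(μt₁₃/2)φ(t₁₂,t₁₃)exp(μt₁₂/2)φ(t₁₂,t₂₃)⁻¹`. -/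
def Hex2 (k : Type*) [Field k] {A : Type*} [Ring A] [Algebra k A]
    (μ : k) (φ : NC k 2) (a b c : A) : Prop :=
  expPS k ((μ / 2) • (lin a + lin b)) =
    PSInv (substPS φ (lin c) (lin b)) * expPS k ((μ / 2) • lin b) * substPS φ (lin a) (lin b) *
      expPS k ((μ / 2) • lin a) * PSInv (substPS φ (lin a) (lin c))

/-- `(ad Y)^m (X)` in the model of `k⟨⟨X,Y⟩⟩`. -/
noncomputable def adYiter (k : Type*) [CommRing k] (m : ℕ) :
    PowerSeries (FreeAlgebra k (Fin 2)) :=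
  (fun z => YF k * z - z * YF k)^[m] (XF k)

/-!
Taking the coefficient of a word `w` of length `m` in `R(X, Y) = Σ a_m (ad Y)^{m-1}(X)` gives
`R w = a_m · c_w`, where `c_w` is the coefficient of `w` in `(ad Y)^{m-1}(X)`. Every word of
`(ad Y)^{m-1}(X)` contains exactly one `X`, and `Y^{m-1}X` occurs with coefficient `1`. Its swap
`X^{m-1}Y` contains `m - 1` letters `X`, so for `m ≠ 2` antisymmetry reads `a_m · 0 = -a_m`.
-/

namespace FreeAlgebra

variable {k α : Type*} [CommRing k]

noncomputable def wordCoeff (w : List α) : FreeAlgebra k α →ₗ[k] k :=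
  Finsupp.lapply (FreeMonoid.ofList w) ∘ₗ (MonoidAlgebra.coeffLinearEquiv k).toLinearMap ∘ₗ
    equivMonoidAlgebraFreeMonoid.toLinearMap

theorem wordCoeff_apply (w : List α) (x : FreeAlgebra k α) :
    wordCoeff w x = (equivMonoidAlgebraFreeMonoid x).coeff (FreeMonoid.ofList w) :=
  rfl

theorem equivMonoidAlgebraFreeMonoid_ι (a : α) :
    equivMonoidAlgebraFreeMonoid (ι k a) = MonoidAlgebra.single (FreeMonoid.of a) 1 := by
  simp [equivMonoidAlgebraFreeMonoid]

theorem equivMonoidAlgebraFreeMonoid_prod_map_ι (v : List α) :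
    equivMonoidAlgebraFreeMonoid (v.map (ι k)).prod =
      MonoidAlgebra.single (FreeMonoid.ofList v) 1 := by
  induction v with
  | nil => simp [MonoidAlgebra.one_def]
  | cons a v ih =>
    rw [List.map_cons, List.prod_cons, map_mul, equivMonoidAlgebraFreeMonoid_ι, ih,
      MonoidAlgebra.single_mul_single, one_mul, FreeMonoid.ofList_cons]

theorem wordCoeff_prod_map_ι [DecidableEq α] (v w : List α) :
    wordCoeff w (v.map (ι k)).prod = if v = w then 1 else 0 := by
  classical
  simp [wordCoeff_apply, equivMonoidAlgebraFreeMonoid_prod_map_ι, Finsupp.single_apply]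

theorem wordCoeff_ι [DecidableEq α] (a : α) (w : List α) :
    wordCoeff w (ι k a) = if [a] = w then 1 else 0 := by
  simpa using wordCoeff_prod_map_ι (k := k) [a] w

theorem wordCoeff_nil_ι_mul (a : α) (x : FreeAlgebra k α) : wordCoeff [] (ι k a * x) = 0 := by
  rw [wordCoeff_apply, map_mul, equivMonoidAlgebraFreeMonoid_ι]
  exact MonoidAlgebra.coeff_single_mul_of_forall_mul_ne _ _ fun d h => by
    simpa using congrArg FreeMonoid.toList h

theorem wordCoeff_cons_ι_mul [DecidableEq α] (a b : α) (w : List α) (x : FreeAlgebra k α) :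
    wordCoeff (b :: w) (ι k a * x) = if a = b then wordCoeff w x else 0 := by
  rw [wordCoeff_apply, wordCoeff_apply, map_mul, equivMonoidAlgebraFreeMonoid_ι]
  split_ifs with hab
  · subst hab
    rw [MonoidAlgebra.coeff_single_mul_eq_mul_coeff (FreeMonoid.ofList w) fun _ _ => by
      rw [FreeMonoid.ofList_cons, mul_right_inj], one_mul]
  · exact MonoidAlgebra.coeff_single_mul_of_forall_mul_ne _ _ fun d h => hab <| by
      simpa using congrArg (fun m => (FreeMonoid.toList m).head?) h

theorem wordCoeff_nil_mul_ι (a : α) (x : FreeAlgebra k α) : wordCoeff [] (x * ι k a) = 0 := by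
  rw [wordCoeff_apply, map_mul, equivMonoidAlgebraFreeMonoid_ι]
  exact MonoidAlgebra.coeff_mul_single_of_forall_mul_ne _ _ fun d h => by
    simpa using congrArg FreeMonoid.toList h

theorem wordCoeff_append_singleton_mul_ι [DecidableEq α] (a b : α) (w : List α)
    (x : FreeAlgebra k α) :
    wordCoeff (w ++ [b]) (x * ι k a) = if a = b then wordCoeff w x else 0 := by
  rw [wordCoeff_apply, wordCoeff_apply, map_mul, equivMonoidAlgebraFreeMonoid_ι]
  split_ifs with hab
  · subst hab
    rw [MonoidAlgebra.coeff_mul_single_eq_coeff_mul (FreeMonoid.ofList w) fun _ _ => by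
      rw [FreeMonoid.ofList_append, FreeMonoid.ofList_singleton, mul_left_inj], mul_one]
  · exact MonoidAlgebra.coeff_mul_single_of_forall_mul_ne _ _ fun d h => hab <| by
      simpa using congrArg (fun m => (FreeMonoid.toList m).getLast?) h

end FreeAlgebra

open FreeAlgebra

section Substitution

open PowerSeries

variable {A : Type*} [Ring A]

theorem lin_eq_monomial (a : A) : lin a = monomial 1 a := by
  ext n
  rw [lin, coeff_mk, coeff_monomial]

theorem prod_map_lin (l : List A) : (l.map lin).prod = monomial l.length l.prod := by
  induction l with
  | nil => simp
  | cons a l ih =>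
    rw [List.map_cons, List.prod_cons, ih, lin_eq_monomial, monomial_mul_monomial, add_comm,
      List.length_cons, List.prod_cons]

variable {k : Type*} [CommRing k]

theorem coeff_substPS_XF_YF (φ : NC k 2) (n : ℕ) :
    coeff n (substPS φ (XF k) (YF k)) =
      ∑ u : Fin n → Fin 2, φ (List.ofFn u) • ((List.ofFn u).map (ι k)).prod := by
  have hword : ∀ (m : ℕ) (u : Fin m → Fin 2),
      ((List.ofFn u).map ![XF k, YF k]).prod = monomial m ((List.ofFn u).map (ι k)).prod := by
    intro m u
    have : ![XF k, YF k] = lin ∘ ι k := by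
      ext i : 1
      fin_cases i <;> rfl
    rw [this, ← List.map_map, prod_map_lin, List.length_map, List.length_ofFn]
  rw [substPS, coeff_mk, Finset.sum_eq_single_of_mem n (Finset.self_mem_range_succ n)]
  · simp only [hword, coeff_monomial_same]
  · intro m _ hm
    exact Finset.sum_eq_zero fun u _ => by rw [hword, coeff_monomial, if_neg hm.symm, smul_zero]

theorem wordCoeff_coeff_substPS_XF_YF (φ : NC k 2) (w : Word 2) :
    wordCoeff w (coeff w.length (substPS φ (XF k) (YF k))) = φ w := by
  simp only [coeff_substPS_XF_YF, map_sum, map_smul, wordCoeff_prod_map_ι, smul_eq_mul,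
    mul_ite, mul_one, mul_zero]
  rw [Finset.sum_eq_single_of_mem w.get (Finset.mem_univ _), if_pos (List.ofFn_get w),
    List.ofFn_get]
  intro u _ hu
  exact if_neg fun h => hu (List.ofFn_injective (h.trans (List.ofFn_get w).symm))

end Substitution

noncomputable def adYFree (k : Type*) [CommRing k] (m : ℕ) : FreeAlgebra k (Fin 2) :=
  (fun z => ι k 1 * z - z * ι k 1)^[m] (ι k 0)

section AdY

variable {k : Type*} [CommRing k]

theorem adYFree_succ (m : ℕ) :
    adYFree k (m + 1) = ι k 1 * adYFree k m - adYFree k m * ι k 1 :=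
  Function.iterate_succ_apply' _ _ _

theorem adYiter_eq_monomial (m : ℕ) :
    adYiter k m = PowerSeries.monomial (m + 1) (adYFree k m) := by
  induction m with
  | zero => exact lin_eq_monomial _
  | succ m ih =>
    rw [adYiter, Function.iterate_succ_apply', ← adYiter, ih, adYFree_succ, YF,
      lin_eq_monomial, PowerSeries.monomial_mul_monomial, PowerSeries.monomial_mul_monomial,
      map_sub, add_comm 1]

theorem wordCoeff_adYFree_of_count_ne {m : ℕ} {w : Word 2} (hw : w.count 0 ≠ 1) :
    wordCoeff w (adYFree k m) = 0 := by
  induction m generalizing w with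
  | zero => exact (wordCoeff_ι _ _).trans (if_neg fun h => hw (by simp [← h]))
  | succ m ih =>
    have hleft : wordCoeff w (ι k 1 * adYFree k m) = 0 := by
      cases w with
      | nil => exact wordCoeff_nil_ι_mul _ _
      | cons b w =>
        rw [wordCoeff_cons_ι_mul]
        split_ifs with hb
        · exact ih (by simpa [← hb] using hw)
        · rfl
    have hright : wordCoeff w (adYFree k m * ι k 1) = 0 := by
      induction w using List.reverseRecOn with
      | nil => exact wordCoeff_nil_mul_ι _ _
      | append_singleton w b _ =>
        rw [wordCoeff_append_singleton_mul_ι]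
        split_ifs with hb
        · exact ih (by simpa [← hb] using hw)
        · rfl
    rw [adYFree_succ, map_sub, hleft, hright, sub_zero]

theorem wordCoeff_replicate_adYFree (m : ℕ) :
    wordCoeff (List.replicate m 1 ++ [0]) (adYFree k m) = 1 := by
  induction m with
  | zero => simp [adYFree, wordCoeff_ι]
  | succ m ih =>
    rw [adYFree_succ, map_sub, List.replicate_succ, List.cons_append, wordCoeff_cons_ι_mul,
      if_pos rfl, ih, ← List.cons_append, ← List.replicate_succ,
      wordCoeff_append_singleton_mul_ι, if_neg (by decide), sub_zero]

end AdY

section Antisymmetry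

variable {k : Type*} [CommRing k] (R : NC k 2) (a : ℕ → k)

theorem apply_eq_mul_wordCoeff_adYFree
    (ha : ∀ n : ℕ, PowerSeries.coeff n (substPS R (XF k) (YF k)) =
      a n • PowerSeries.coeff n (adYiter k (n - 1)))
    {w : Word 2} (hw : w ≠ []) :
    R w = a w.length * wordCoeff w (adYFree k (w.length - 1)) := by
  have h := congrArg (wordCoeff w) (ha w.length)
  have hlen : w.length = w.length - 1 + 1 := by
    have := List.length_pos_iff.2 hw
    omega
  rwa [wordCoeff_coeff_substPS_XF_YF, adYiter_eq_monomial, PowerSeries.coeff_monomial,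
    if_pos hlen, map_smul, smul_eq_mul] at h

theorem eq_zero_of_swap_antisymm
    (ha : ∀ n : ℕ, PowerSeries.coeff n (substPS R (XF k) (YF k)) =
      a n • PowerSeries.coeff n (adYiter k (n - 1)))
    (hanti : ∀ w : Word 2, R (w.map ![1, 0]) = -R w)
    {m : ℕ} (hm : 1 ≤ m) (hm2 : m ≠ 2) : a m = 0 := by
  set w : Word 2 := List.replicate (m - 1) 1 ++ [0]
  have hlen : w.length = m := by simp [w]; omega
  have hw : R w = a m := by
    rw [apply_eq_mul_wordCoeff_adYFree R a ha (by simp [w]), hlen,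
      wordCoeff_replicate_adYFree, mul_one]
  have hswap : R (w.map ![1, 0]) = 0 := by
    rw [apply_eq_mul_wordCoeff_adYFree R a ha (by simp [w]),
      wordCoeff_adYFree_of_count_ne (by simp [w]; omega), mul_zero]
  simpa [hswap, hw] using hanti w

end Antisymmetry

theorem statement2_general (k : Type*) [Field k] (R : NC k 2)
    (a : ℕ → k)
    (ha : ∀ n : ℕ,
      PowerSeries.coeff n (substPS R (XF k) (YF k)) =
        a n • PowerSeries.coeff n (adYiter k (n - 1)))
    (hanti : ∀ w : Word 2, R (w.map ![1, 0]) = -R w) :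
    (∀ m : ℕ, 1 ≤ m → m ≠ 2 → a m = 0) ∧
      substPS R (XF k) (YF k) = a 2 • (YF k * XF k - XF k * YF k) := by
  have hvanish : ∀ m : ℕ, 1 ≤ m → m ≠ 2 → a m = 0 := fun m hm hm2 =>
    eq_zero_of_swap_antisymm R a ha hanti hm hm2
  refine ⟨hvanish, ?_⟩
  ext n
  rw [ha n, PowerSeries.coeff_smul, show YF k * XF k - XF k * YF k = adYiter k 1 from rfl,
    adYiter_eq_monomial, adYiter_eq_monomial,
    PowerSeries.coeff_monomial, PowerSeries.coeff_monomial]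
  rcases Nat.lt_or_ge n 1 with hn | hn
  · simp [show n = 0 by omega]
  · by_cases hn2 : n = 2
    · subst hn2; rfl
    · rw [hvanish n hn hn2, zero_smul, if_neg (by omega), smul_zero]

/-- If a Lie series `R ∈ 𝔉₂` is of the form `R = Σ_{m≥1} a_m (ad Y)^{m-1}(X)`
and satisfies the antisymmetry `R(X,Y) = -R(Y,X)` (swap of the two
generators), then `a_m = 0` for all `m ≠ 2`, i.e. `R = a₂ [Y,X]`. -/
theorem statement2 (k : Type*) [Field k] [CharZero k] (R : NC k 2)
    (hR : IsLieLike R) (a : ℕ → k)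
    (ha : ∀ n : ℕ,
      PowerSeries.coeff n (substPS R (XF k) (YF k)) =
        a n • PowerSeries.coeff n (adYiter k (n - 1)))
    (hanti : ∀ w : Word 2, R (w.map ![1, 0]) = -R w) :
    (∀ m : ℕ, 1 ≤ m → m ≠ 2 → a m = 0) ∧
      substPS R (XF k) (YF k) = a 2 • (YF k * XF k - XF k * YF k) :=
  statement2_general k R a ha hanti
end

section
/- Let φ be a commutator group-like element of k⟨⟨X,Y⟩⟩ (group-like with vanishing coefficients of X and Y). Then for any elements A, B, C of a complete topological k-algebra S generated by primitive-compatible images such that [A,C]=0 and [B,C]=0, one has φ(A+C, B) = φ(A, B+C) = φ(A, B). -/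
open scoped BigOperators

variable {k : Type*}

/-! Expand every letter `X` of `φ(U + W, V)` into `U` or `W` and move the central `W`s to the
front: the terms with `j` letters `W` add up to `W ^ j` times the evaluation at `(U, V)` of
`s ↦ ∑_{w ∈ X^j ⧢ s} φ w`. For group-like `φ` this function is `φ(X^j) • φ`, and
`(j + 1) φ(X^{j+1}) = φ(X) φ(X^j) = 0`, so only `j = 0` survives. The same argument with the
letter `Y` gives `φ(U, V + W) = φ(U, V)`. -/

open Finset

section Shuffle

variable {α M : Type*} [AddCommMonoid M]

def shuffleSum (u : List α) (f : List α → M) (s : List α) : M :=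
  ((shuffle u s).map f).sum

@[simp]
theorem shuffleSum_nil_left (f : List α → M) : shuffleSum [] f = f := by
  funext s
  cases s <;> simp [shuffleSum, shuffle]

@[simp]
theorem shuffleSum_nil_right (u : List α) (f : List α → M) : shuffleSum u f [] = f u := by
  cases u <;> simp [shuffleSum, shuffle]

theorem shuffleSum_cons_cons (x a : α) (u s : List α) (f : List α → M) :
    shuffleSum (x :: u) f (a :: s) =
      shuffleSum u (fun w => f (x :: w)) (a :: s) +
        shuffleSum (x :: u) (fun w => f (a :: w)) s := by
  simp [shuffleSum, shuffle, Function.comp_def]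

theorem shuffle_singleton_replicate (x : α) (n : ℕ) :
    shuffle [x] (List.replicate n x) = List.replicate (n + 1) (List.replicate (n + 1) x) := by
  induction n with
  | zero => simp [shuffle]
  | succ n ih =>
    rw [List.replicate_succ, shuffle, ih]
    simp [shuffle, List.replicate_succ]

end Shuffle

theorem IsGroupLike.apply_replicate_succ_eq_zero [CommRing k] [IsAddTorsionFree k] {φ : NC k 2}
    (hφ : IsGroupLike φ) {x : Fin 2} (hx : φ [x] = 0) (j : ℕ) :
    φ (List.replicate (j + 1) x) = 0 := by
  have h := hφ.2 [x] (List.replicate j x)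
  rw [hx, zero_mul, shuffle_singleton_replicate, List.map_replicate, List.sum_replicate] at h
  exact (nsmul_eq_zero_iff_right j.succ_ne_zero).1 h.symm

theorem Finset.Nat.sum_antidiagonal_succ_of_pascal {M : Type*} [AddCommMonoid M]
    {F a b : ℕ → ℕ → M} (h0 : ∀ l, F 0 (l + 1) = b 0 l) (h1 : ∀ j, F (j + 1) 0 = a j 0)
    (h2 : ∀ j l, F (j + 1) (l + 1) = a j (l + 1) + b (j + 1) l) (m : ℕ) :
    ∑ p ∈ antidiagonal (m + 1), F p.1 p.2 =
      ∑ p ∈ antidiagonal m, a p.1 p.2 + ∑ p ∈ antidiagonal m, b p.1 p.2 := by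
  rw [sum_antidiagonal_succ]
  cases m with
  | zero => simp [h0, h1, add_comm]
  | succ m =>
    rw [sum_antidiagonal_succ', sum_antidiagonal_succ' (f := fun p => a p.1 p.2),
      sum_antidiagonal_succ (f := fun p => b p.1 p.2)]
    simp only [h0, h1, h2, sum_add_distrib]
    abel

section EvalDeg

variable {α R : Type*} [Fintype α] [CommSemiring k] [Semiring R] [Algebra k R]

def evalDeg (e : α → R) (f : List α → k) (m : ℕ) : R :=
  ∑ u : Fin m → α, f (List.ofFn u) • ((List.ofFn u).map e).prod

@[simp]
theorem evalDeg_zero (e : α → R) (f : List α → k) : evalDeg e f 0 = f [] • 1 := by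
  simp [evalDeg]

theorem evalDeg_succ (e : α → R) (f : List α → k) (m : ℕ) :
    evalDeg e f (m + 1) = ∑ a, e a * evalDeg e (fun w => f (a :: w)) m := by
  rw [evalDeg, ← (Fin.consEquiv fun _ => α).sum_comp, Fintype.sum_prod_type]
  simp [evalDeg, mul_sum]

theorem evalDeg_add (e : α → R) (f g : List α → k) (m : ℕ) :
    evalDeg e (f + g) m = evalDeg e f m + evalDeg e g m := by
  simp [evalDeg, add_smul, sum_add_distrib]

@[simp]
theorem evalDeg_zero_left (e : α → R) (m : ℕ) : evalDeg e (0 : List α → k) m = 0 := by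
  simp [evalDeg]

theorem evalDeg_add_single_eq_sum [DecidableEq α] (e : α → R) (x : α) (C : R)
    (hC : ∀ a, Commute C (e a)) (f : List α → k) (m : ℕ) :
    evalDeg (e + Pi.single x C) f m =
      ∑ p ∈ antidiagonal m, C ^ p.1 * evalDeg e (shuffleSum (List.replicate p.1 x) f) p.2 := by
  induction m generalizing f with
  | zero => simp
  | succ m ih =>
    have hsplit : ∀ g : α → R,
        ∑ a, (e + Pi.single x C : α → R) a * g a = ∑ a, e a * g a + C * g x := by
      intro g
      simp [add_mul, sum_add_distrib, Pi.single_apply]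
    rw [evalDeg_succ, hsplit]
    simp only [ih, mul_sum]
    rw [sum_comm, add_comm]
    symm
    refine Finset.Nat.sum_antidiagonal_succ_of_pascal
      (F := fun j l => C ^ j * evalDeg e (shuffleSum (List.replicate j x) f) l)
      (a := fun j l => C * (C ^ j * evalDeg e (shuffleSum (List.replicate j x)
        (fun w => f (x :: w))) l))
      (b := fun j l => ∑ a, e a * (C ^ j * evalDeg e (shuffleSum (List.replicate j x)
        (fun w => f (a :: w))) l)) ?_ ?_ ?_ m
    · intro l
      simp [evalDeg_succ]
    · intro j
      simp [pow_succ', List.replicate_succ]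
    · intro j l
      have hcons : ∀ a, (fun w => shuffleSum (List.replicate (j + 1) x) f (a :: w)) =
          (fun w => shuffleSum (List.replicate j x) (fun w => f (x :: w)) (a :: w)) +
            shuffleSum (List.replicate (j + 1) x) (fun w => f (a :: w)) :=
        fun a => funext fun w => shuffleSum_cons_cons x a _ w f
      simp only [evalDeg_succ, hcons, evalDeg_add, mul_add, sum_add_distrib, mul_sum]
      congr 1 <;> refine sum_congr rfl fun a _ => ?_
      · rw [pow_succ', mul_assoc]
      · rw [← mul_assoc, ← mul_assoc, ((hC a).pow_left _).eq]

end EvalDeg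

theorem IsGroupLike.evalDeg_add_single [CommRing k] [IsAddTorsionFree k] {R : Type*} [Semiring R]
    [Algebra k R] {φ : NC k 2} (hφ : IsGroupLike φ) {x : Fin 2} (hx : φ [x] = 0)
    {e : Fin 2 → R} {C : R} (hC : ∀ a, Commute C (e a)) (m : ℕ) :
    evalDeg (e + Pi.single x C) φ m = evalDeg e φ m := by
  rw [evalDeg_add_single_eq_sum e x C hC, sum_eq_single (0, m)]
  · simp
  · rintro ⟨_ | j, l⟩ _ hne
    · simp_all
    · have hvanish : shuffleSum (List.replicate (j + 1) x) φ = 0 := by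
        funext s
        rw [shuffleSum, ← hφ.2, hφ.apply_replicate_succ_eq_zero hx, zero_mul, Pi.zero_apply]
      simp [hvanish]
  · simp

theorem substPS_eq_sum_evalDeg [CommRing k] {A : Type*} [Ring A] [Algebra k A]
    (φ : NC k 2) (P Q : PowerSeries A) :
    substPS φ P Q = PowerSeries.mk fun n =>
      ∑ m ∈ range (n + 1), PowerSeries.coeff n (evalDeg ![P, Q] φ m) := by
  simp [substPS, evalDeg, map_sum]

theorem substPS_congr [CommRing k] {A : Type*} [Ring A] [Algebra k A] {φ : NC k 2}
    {P Q P' Q' : PowerSeries A} (h : ∀ m, evalDeg ![P, Q] φ m = evalDeg ![P', Q'] φ m) :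
    substPS φ P Q = substPS φ P' Q' := by
  simp only [substPS_eq_sum_evalDeg, h]

theorem statement6_general (k : Type*) [Field k] [CharZero k] (φ : NC k 2)
    (hφ : IsCommGroupLike φ) (S : Type*) [Ring S] [Algebra k S]
    (U V W : PowerSeries S)
    (hUW : U * W = W * U) (hVW : V * W = W * V) :
    substPS φ (U + W) V = substPS φ U V ∧ substPS φ U (V + W) = substPS φ U V := by
  have hcomm : ∀ a, Commute W (![U, V] a) := by
    intro a
    fin_cases a
    exacts [hUW.symm, hVW.symm]
  have hleft : ![U + W, V] = ![U, V] + Pi.single 0 W := by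
    funext a
    fin_cases a <;> simp
  have hright : ![U, V + W] = ![U, V] + Pi.single 1 W := by
    funext a
    fin_cases a <;> simp
  constructor <;> refine substPS_congr fun m => ?_
  · rw [hleft, hφ.1.evalDeg_add_single hφ.2.1 hcomm]
  · rw [hright, hφ.1.evalDeg_add_single hφ.2.2 hcomm]

/-- For a commutator group-like `φ` and topologically nilpotent elements
`U, V, W` of a complete (filtered) `k`-algebra — modelled by power series with
vanishing constant term over an arbitrary `k`-algebra `S` — with `[U,W] = 0`
and `[V,W] = 0`, one has `φ(U+W, V) = φ(U, V+W) = φ(U,V)`. -/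
theorem statement6 (k : Type*) [Field k] [CharZero k] (φ : NC k 2)
    (hφ : IsCommGroupLike φ) (S : Type*) [Ring S] [Algebra k S]
    (U V W : PowerSeries S)
    (hU : PowerSeries.constantCoeff U = 0) (hV : PowerSeries.constantCoeff V = 0)
    (hW : PowerSeries.constantCoeff W = 0)
    (hUW : U * W = W * U) (hVW : V * W = W * V) :
    substPS φ (U + W) V = substPS φ U V ∧ substPS φ U (V + W) = substPS φ U V :=
  statement6_general k φ hφ S U V W hUW hVW
end
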